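/- arXiv:1901.00185 — 2 statements merged into one kernel-verified Lean document; each statement's English description precedes it below -/
import Mathlib

section
/- Let P be a two-color grid poset, L := J_color(P), t ∈ L, and γ ∈ {α, β}. Then the map φ : comp_γ(t) → J(I_1) × ⋯ × J(I_k) given by φ(s) := (s ∩ I_1, …, s ∩ I_k) is a well-defined poset isomorphism onto the product of the chains J(I_1), …, J(I_k). In particular, comp_γ(t) is order-isomorphic to a product of chains. -/
open scoped Classical

structure GridData (P : Type) [PartialOrder P] where
  m : ℕ
  chain : P → ℕ
  color : P → Fin 2

def IsIdeal {P : Type} [PartialOrder P] (t : Finset P) : Prop :=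
  ∀ ⦃x⦄, x ∈ t → ∀ ⦃y⦄, y ≤ x → y ∈ t

namespace GridData

variable {P : Type} [PartialOrder P] [Fintype P]

/-- The defining properties of a grid poset. -/
def IsGridPoset (G : GridData P) : Prop :=
  1 ≤ G.m ∧
  (∀ u : P, G.chain u ∈ Finset.Icc 1 G.m) ∧
  (∀ i ∈ Finset.Icc 1 G.m, ∃ u : P, G.chain u = i) ∧
  (∀ u v : P, G.chain u = G.chain v → u ≤ v ∨ v ≤ u) ∧
  (∀ u v : P, u ⋖ v → G.chain u = G.chain v ∨ G.chain u = G.chain v + 1)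

/-- The defining properties of a two-color grid poset. -/
def IsTwoColorGridPoset (G : GridData P) : Prop :=
  G.IsGridPoset ∧
  (∀ u v : P, G.chain u = G.chain v → G.color u = G.color v) ∧
  (∀ u v : P, Relation.ReflTransGen (fun x y : P => x ⋖ y ∨ y ⋖ x) u v →
    G.chain u = G.chain v + 1 → G.color u ≠ G.color v)

/-- The max property. -/
def MaxProperty (G : GridData P) : Prop :=
  (∀ u : P, IsMax u → G.chain u ≤ 2) ∧
  (∀ u v : P, IsMax u → IsMax v → u ≠ v → G.color u ≠ G.color v)

/-- The fiber `C i` of the chain function. -/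
def fiber (G : GridData P) (i : ℕ) : Finset P :=
  Finset.univ.filter (fun u => G.chain u = i)

/-- One step in a `γ`-component of `J_color(P)`: add or remove a single vertex of
color `γ` while both sets are order ideals. -/
def GStep (G : GridData P) (γ : Fin 2) (s t : Finset P) : Prop :=
  IsIdeal s ∧ IsIdeal t ∧ ∃ u : P, G.color u = γ ∧
    ((u ∉ s ∧ t = insert u s) ∨ (u ∉ t ∧ s = insert u t))

/-- The `γ`-component of `t` in `J_color(P)`. -/
def comp (G : GridData P) (γ : Fin 2) (t : Finset P) : Set (Finset P) :=
  {s | Relation.ReflTransGen (G.GStep γ) t s}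

noncomputable def minCard (G : GridData P) (γ : Fin 2) (t : Finset P) : ℕ :=
  sInf (Finset.card '' G.comp γ t)

noncomputable def maxCard (G : GridData P) (γ : Fin 2) (t : Finset P) : ℕ :=
  sSup (Finset.card '' G.comp γ t)

/-- `m_γ(t) = 2 ρ_γ(t) - l_γ(t)`. -/
noncomputable def mcoord (G : GridData P) (γ : Fin 2) (t : Finset P) : ℤ :=
  2 * ((t.card : ℤ) - (G.minCard γ t : ℤ)) - ((G.maxCard γ t : ℤ) - (G.minCard γ t : ℤ))

/-- The weight of an element of `J_color(P)` (color `0` is α, color `1` is β). -/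
noncomputable def wt (G : GridData P) (t : Finset P) : Fin 2 → ℤ :=
  ![G.mcoord 0 t, G.mcoord 1 t]

/-- `J_color(P)` is `M`-structured. -/
def MStructured (G : GridData P) (M : Matrix (Fin 2) (Fin 2) ℤ) : Prop :=
  ∀ s t : Finset P, IsIdeal s → IsIdeal t → ∀ u : P, u ∉ s → t = insert u s →
    G.wt s + M (G.color u) = G.wt t

end GridData

namespace GridData

variable {P : Type} [PartialOrder P] [Fintype P]

/-- The indices `i ∈ {1,…,m}` of the fibers whose vertices have color `γ`. -/
def colorIdx (G : GridData P) (γ : Fin 2) : Finset ℕ :=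
  (Finset.Icc 1 G.m).filter (fun i => ∃ u : P, G.chain u = i ∧ G.color u = γ)

/-- `I_j`: the largest subset `I` of the fiber `C i` such that both `t ∪ I` and
`t \ I` are order ideals (realized as the union of all such subsets). -/
noncomputable def Imax (G : GridData P) (t : Finset P) (i : ℕ) : Finset P :=
  (G.fiber i).filter (fun x =>
    ∃ J ⊆ G.fiber i, x ∈ J ∧ IsIdeal (t ∪ J) ∧ IsIdeal (t \ J))

end GridData

/-- `s` is an order ideal of the subposet `I` (in the induced order). -/
def IdealOfChain {P : Type} [PartialOrder P] (I s : Finset P) : Prop :=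
  s ⊆ I ∧ ∀ x ∈ s, ∀ y ∈ I, y ≤ x → y ∈ s

/-!
Call the vertices of `I_1 ∪ ⋯ ∪ I_k` free. An ideal lies in `comp_γ(t)` iff it agrees with `t`
off the free vertices. Indeed, the vertices of `I_j` are characterised by conditions on the
other fibers only, and between comparable vertices of distinct fibers of color
`γ` there is a vertex of the other color, which stays put; so a `γ`-step can only move a free
vertex. Conversely, two ideals that differ only in free vertices are joined by `γ`-steps through
their intersection. Free vertices of different fibers are incomparable, so such an ideal is the
same thing as a choice of a down-set in each chain `I_j`.
-/

lemma IdealOfChain.subset_or_subset {P : Type} [PartialOrder P] {I s₁ s₂ : Finset P}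
    (hI : IsChain (· ≤ ·) (I : Set P)) (h₁ : IdealOfChain I s₁) (h₂ : IdealOfChain I s₂) :
    s₁ ⊆ s₂ ∨ s₂ ⊆ s₁ := by
  by_contra! hne
  obtain ⟨x, hx₁, hx₂⟩ := Finset.not_subset.1 hne.1
  obtain ⟨y, hy₂, hy₁⟩ := Finset.not_subset.1 hne.2
  rcases hI.total (h₁.1 hx₁) (h₂.1 hy₂) with hxy | hyx
  · exact hx₂ (h₂.2 y hy₂ x (h₁.1 hx₁) hxy)
  · exact hy₁ (h₁.2 x hx₁ y (h₂.1 hy₂) hyx)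

lemma IsIdeal.inter {P : Type} [PartialOrder P] {s t : Finset P} (hs : IsIdeal s)
    (ht : IsIdeal t) : IsIdeal (s ∩ t) := fun _ hx _ hyx =>
  Finset.mem_inter.2 ⟨hs (Finset.mem_inter.1 hx).1 hyx, ht (Finset.mem_inter.1 hx).2 hyx⟩

lemma IsIdeal.idealOfChain_inter {P : Type} [PartialOrder P] {s : Finset P} (hs : IsIdeal s)
    (I : Finset P) : IdealOfChain I (s ∩ I) :=
  ⟨Finset.inter_subset_right, fun _ hx _ hy hyx =>
    Finset.mem_inter.2 ⟨hs (Finset.mem_inter.1 hx).1 hyx, hy⟩⟩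

namespace GridData

section Steps

variable {P : Type} [PartialOrder P] {G : GridData P} {γ : Fin 2} {s t : Finset P}

lemma gStep_symm (h : G.GStep γ s t) : G.GStep γ t s :=
  ⟨h.2.1, h.1, h.2.2.imp fun _ hu => ⟨hu.1, hu.2.symm⟩⟩

/-- Removing a maximal element of `t \ s` at a time walks from `t` down to `s`. -/
lemma reflTransGen_gStep_of_subset (hs : IsIdeal s) (ht : IsIdeal t) (hst : s ⊆ t)
    (hcolor : ∀ x ∈ t \ s, G.color x = γ) : Relation.ReflTransGen (G.GStep γ) t s := by
  induction h : (t \ s).card generalizing t with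
  | zero =>
    rw [Finset.card_eq_zero, Finset.sdiff_eq_empty_iff_subset] at h
    rw [hst.antisymm h]
  | succ n ih =>
    have hne : (t \ s).Nonempty := Finset.card_pos.1 (by omega)
    obtain ⟨u, hu, hmax⟩ := Finset.exists_maximal hne
    obtain ⟨hut, hus⟩ := Finset.mem_sdiff.1 hu
    have ht' : IsIdeal (t.erase u) := by
      intro x hx y hyx
      obtain ⟨hxu, hxt⟩ := Finset.mem_erase.1 hx
      refine Finset.mem_erase.2 ⟨?_, ht hxt hyx⟩
      rintro rfl
      have hxs : x ∉ s := fun hxs => hus (hs hxs hyx)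
      exact hxu (le_antisymm (hmax (Finset.mem_sdiff.2 ⟨hxt, hxs⟩) hyx) hyx)
    refine .head ⟨ht, ht', u, hcolor u hu, .inr ⟨Finset.notMem_erase u t,
      (Finset.insert_erase hut).symm⟩⟩ (ih ht' ?_ ?_ ?_)
    · exact fun x hx => Finset.mem_erase.2 ⟨fun h => hus (h ▸ hx), hst hx⟩
    · exact fun x hx => hcolor x (Finset.sdiff_subset_sdiff (Finset.erase_subset u t) le_rfl hx)
    · rw [Finset.erase_sdiff_comm, Finset.card_erase_of_mem hu, h, Nat.add_sub_cancel]

/-- Two ideals are joined by `γ`-steps through their intersection. -/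
lemma reflTransGen_gStep (hs : IsIdeal s) (ht : IsIdeal t)
    (hst : ∀ x ∈ s \ t, G.color x = γ) (hts : ∀ x ∈ t \ s, G.color x = γ) :
    Relation.ReflTransGen (G.GStep γ) t s := by
  have t_to_inter : Relation.ReflTransGen (G.GStep γ) t (s ∩ t) :=
    reflTransGen_gStep_of_subset (hs.inter ht) ht Finset.inter_subset_right
      fun x hx => hts x (by simpa using hx)
  have s_to_inter : Relation.ReflTransGen (G.GStep γ) s (s ∩ t) :=
    reflTransGen_gStep_of_subset (hs.inter ht) hs Finset.inter_subset_left
      fun x hx => hst x (by simpa using hx)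
  have inter_to_s : Relation.ReflTransGen (G.GStep γ) (s ∩ t) s :=
    Relation.reflTransGen_swap.1 <|
      Relation.ReflTransGen.mono (p := Function.swap (G.GStep γ)) (fun _ _ => gStep_symm) _ _
        s_to_inter
  exact t_to_inter.trans inter_to_s

end Steps

variable {P : Type} [PartialOrder P] [Fintype P] {G : GridData P} {t s : Finset P}
  {γ : Fin 2} {i : ℕ}

lemma chain_eq_of_mem_imax {x : P} (hx : x ∈ G.Imax t i) : G.chain x = i := by
  simpa [fiber] using (Finset.mem_filter.1 hx).1

lemma subset_imax {J : Finset P} (hJ : J ⊆ G.fiber i) (hU : IsIdeal (t ∪ J))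
    (hD : IsIdeal (t \ J)) : J ⊆ G.Imax t i :=
  fun _ hx => Finset.mem_filter.2 ⟨hJ hx, J, hJ, hx, hU, hD⟩

lemma isIdeal_union_imax (ht : IsIdeal t) (i : ℕ) : IsIdeal (t ∪ G.Imax t i) := by
  intro x hx y hyx
  rcases Finset.mem_union.1 hx with hx | hx
  · exact Finset.mem_union_left _ (ht hx hyx)
  · obtain ⟨-, J, hJ, hxJ, hU, hD⟩ := Finset.mem_filter.1 hx
    rcases Finset.mem_union.1 (hU (Finset.mem_union_right t hxJ) hyx) with hy | hy
    · exact Finset.mem_union_left _ hy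
    · exact Finset.mem_union_right _ (subset_imax hJ hU hD hy)

lemma isIdeal_sdiff_imax (ht : IsIdeal t) (i : ℕ) : IsIdeal (t \ G.Imax t i) := by
  intro x hx y hyx
  obtain ⟨hxt, hxI⟩ := Finset.mem_sdiff.1 hx
  refine Finset.mem_sdiff.2 ⟨ht hxt hyx, fun hyI => ?_⟩
  obtain ⟨-, J, hJ, hyJ, hU, hD⟩ := Finset.mem_filter.1 hyI
  have hxJ : x ∉ J := fun h => hxI (subset_imax hJ hU hD h)
  exact (Finset.mem_sdiff.1 (hD (Finset.mem_sdiff.2 ⟨hxt, hxJ⟩) hyx)).2 hyJ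

section Separated

variable (G t i)

/-- `I_j` in closed form, see `mem_imax_iff`. -/
noncomputable def separated : Finset P :=
  (G.fiber i).filter fun x =>
    (∀ y, y < x → G.chain y ≠ i → y ∈ t) ∧ (∀ v, x < v → G.chain v ≠ i → v ∉ t)

variable {G t i}

lemma isIdeal_union_separated (ht : IsIdeal t) : IsIdeal (t ∪ G.separated t i) := by
  intro x hx y hyx
  rcases Finset.mem_union.1 hx with hx | hx
  · exact Finset.mem_union_left _ (ht hx hyx)
  obtain ⟨-, hdown, -⟩ := Finset.mem_filter.1 hx
  obtain rfl | hlt := hyx.eq_or_lt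
  · exact Finset.mem_union_right _ hx
  by_cases hyi : G.chain y = i
  · by_cases hyt : y ∈ t
    · exact Finset.mem_union_left _ hyt
    refine Finset.mem_union_right _ (Finset.mem_filter.2 ⟨by simp [fiber, hyi], ?_, ?_⟩)
    · exact fun z hzy hzi => hdown z (hzy.trans hlt) hzi
    · exact fun v hyv _ hvt => hyt (ht hvt hyv.le)
  · exact Finset.mem_union_left _ (hdown y hlt hyi)

lemma isIdeal_sdiff_separated (ht : IsIdeal t) : IsIdeal (t \ G.separated t i) := by
  intro x hx y hyx
  obtain ⟨hxt, hxS⟩ := Finset.mem_sdiff.1 hx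
  refine Finset.mem_sdiff.2 ⟨ht hxt hyx, fun hyS => ?_⟩
  obtain ⟨hyi, -, hup⟩ := Finset.mem_filter.1 hyS
  replace hyi : G.chain y = i := by simpa [fiber] using hyi
  by_cases hxi : G.chain x = i
  · -- `x ∈ t` gives the lower condition, so the upper one fails.
    have : ¬ ∀ v, x < v → G.chain v ≠ i → v ∉ t := fun h => hxS
      (Finset.mem_filter.2 ⟨by simp [fiber, hxi], fun z hzx _ => ht hxt hzx.le, h⟩)
    push Not at this
    obtain ⟨v, hxv, hvi, hvt⟩ := this
    exact hup v (hyx.trans_lt hxv) hvi hvt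
  · exact hup x (hyx.lt_of_ne fun h => hxi (h ▸ hyi)) hxi hxt

end Separated

lemma mem_imax_iff (ht : IsIdeal t) {u : P} :
    u ∈ G.Imax t i ↔ G.chain u = i ∧
      (∀ y, y < u → G.chain y ≠ i → y ∈ t) ∧ (∀ v, u < v → G.chain v ≠ i → v ∉ t) := by
  constructor
  · intro hu
    refine ⟨chain_eq_of_mem_imax hu, fun y hyu hyi => ?_, fun v huv hvi hvt => ?_⟩
    · rcases Finset.mem_union.1
        (isIdeal_union_imax ht i (Finset.mem_union_right t hu) hyu.le) with hy | hy
      · exact hy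
      · exact absurd (chain_eq_of_mem_imax hy) hyi
    · have hvI : v ∉ G.Imax t i := fun h => hvi (chain_eq_of_mem_imax h)
      exact (Finset.mem_sdiff.1
        (isIdeal_sdiff_imax ht i (Finset.mem_sdiff.2 ⟨hvt, hvI⟩) huv.le)).2 hu
  · rintro ⟨hui, hdown, hup⟩
    refine subset_imax (Finset.filter_subset _ _) (isIdeal_union_separated ht)
      (isIdeal_sdiff_separated ht) (Finset.mem_filter.2 ⟨?_, hdown, hup⟩)
    simp [fiber, hui]

lemma isChain_imax (hG : G.IsTwoColorGridPoset) (t : Finset P) (i : ℕ) :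
    IsChain (· ≤ ·) (G.Imax t i : Set P) := fun x hx y hy _ =>
  hG.1.2.2.2.1 x y ((chain_eq_of_mem_imax hx).trans (chain_eq_of_mem_imax hy).symm)

/-- The first covering step out of the fiber of `a` lands in the next fiber, hence changes
color. -/
lemma exists_color_ne_of_lt (hG : G.IsTwoColorGridPoset) {a b : P} (hab : a < b)
    (hchain : G.chain a ≠ G.chain b) : ∃ w, a < w ∧ w ≤ b ∧ G.color w ≠ G.color a := by
  obtain ⟨⟨-, -, -, -, hcov⟩, hconst, hdiff⟩ := hG
  induction a using WellFoundedGT.induction with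
  | _ a ih =>
  obtain ⟨c, hac, hcb⟩ := exists_covBy_le_of_lt hab
  rcases hcov a c hac with hac_chain | hac_chain
  · obtain rfl | hcb := hcb.eq_or_lt
    · exact absurd hac_chain hchain
    obtain ⟨w, hcw, hwb, hw⟩ := ih c hac.lt hcb (hac_chain ▸ hchain)
    exact ⟨w, hac.lt.trans hcw, hwb, hconst c a hac_chain.symm ▸ hw⟩
  · exact ⟨c, hac.lt, hcb, (hdiff a c (.single (.inl hac)) hac_chain).symm⟩

lemma color_eq_of_mem_colorIdx (hG : G.IsTwoColorGridPoset) (hi : i ∈ G.colorIdx γ) {x : P}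
    (hx : G.chain x = i) : G.color x = γ := by
  obtain ⟨-, u, hu, rfl⟩ := Finset.mem_filter.1 hi
  exact hG.2.1 x u (hx.trans hu.symm)

lemma chain_eq_of_lt_of_mem_imax (hG : G.IsTwoColorGridPoset) (ht : IsIdeal t) {i j : ℕ}
    {x y : P} (hx : x ∈ G.Imax t i) (hy : y ∈ G.Imax t j) (hyx : y < x)
    (hcolor : G.color x = G.color y) : G.chain y = G.chain x := by
  by_contra hchain
  obtain ⟨w, hyw, hwx, hw⟩ := exists_color_ne_of_lt hG hyx hchain
  have hwi : G.chain w ≠ i := fun h => hw (by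
    rw [← hcolor]; exact hG.2.1 w x (h.trans (chain_eq_of_mem_imax hx).symm))
  have hwj : G.chain w ≠ j := fun h => hw (hG.2.1 w y (h.trans (chain_eq_of_mem_imax hy).symm))
  have hwt : w ∈ t := ((mem_imax_iff ht).1 hx).2.1 w
    (hwx.lt_of_ne fun h => hwi (h ▸ chain_eq_of_mem_imax hx)) hwi
  exact ((mem_imax_iff ht).1 hy).2.2 w hyw hwj hwt

variable (G t γ)

/-- `I_1 ∪ ⋯ ∪ I_k`. -/
noncomputable def free : Finset P :=
  (G.colorIdx γ).biUnion (G.Imax t)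

variable {G t γ}

lemma mem_free {x : P} : x ∈ G.free t γ ↔ ∃ i ∈ G.colorIdx γ, x ∈ G.Imax t i :=
  Finset.mem_biUnion

lemma color_eq_of_mem_free (hG : G.IsTwoColorGridPoset) {x : P} (hx : x ∈ G.free t γ) :
    G.color x = γ := by
  obtain ⟨i, hi, hxI⟩ := mem_free.1 hx
  exact color_eq_of_mem_colorIdx hG hi (chain_eq_of_mem_imax hxI)

lemma mem_free_of_agree (hG : G.IsTwoColorGridPoset) (ht : IsIdeal t)
    (hs : ∀ x ∉ G.free t γ, x ∈ s ↔ x ∈ t) {u : P} (hu : G.color u = γ)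
    (hdown : ∀ y, y < u → y ∈ s) (hup : ∀ v, u < v → v ∉ s) : u ∈ G.free t γ := by
  have not_free : ∀ {w}, G.color w ≠ γ → w ∉ G.free t γ :=
    fun hw hwU => hw (color_eq_of_mem_free hG hwU)
  refine mem_free.2 ⟨G.chain u, Finset.mem_filter.2 ⟨hG.1.2.1 u, u, rfl, hu⟩,
    (mem_imax_iff ht).2 ⟨rfl, fun y hyu hyc => ?_, fun v huv hvc hvt => ?_⟩⟩
  · by_cases hy : G.color y = γ
    · obtain ⟨w, hyw, hwu, hw⟩ := exists_color_ne_of_lt hG hyu hyc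
      rw [hy] at hw
      have hwu : w < u := hwu.lt_of_ne fun h => hw (h ▸ hu)
      exact ht ((hs w (not_free hw)).1 (hdown w hwu)) hyw.le
    · exact (hs y (not_free hy)).1 (hdown y hyu)
  · by_cases hv : G.color v = γ
    · obtain ⟨w, huw, hwv, hw⟩ := exists_color_ne_of_lt hG huv (Ne.symm hvc)
      rw [hu] at hw
      exact hup w huw ((hs w (not_free hw)).2 (ht hvt hwv))
    · exact hup v huv ((hs v (not_free hv)).2 hvt)

lemma agree_of_mem_comp (hG : G.IsTwoColorGridPoset) (ht : IsIdeal t) (hs : s ∈ G.comp γ t) :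
    IsIdeal s ∧ ∀ x ∉ G.free t γ, x ∈ s ↔ x ∈ t := by
  induction hs with
  | refl => exact ⟨ht, fun _ _ => Iff.rfl⟩
  | @tail b c _ hbc ih =>
    obtain ⟨hb, hc, u, hu, hstep⟩ := hbc
    have huU : u ∈ G.free t γ := by
      refine mem_free_of_agree hG ht ih.2 hu ?_ ?_
      · rcases hstep with ⟨-, rfl⟩ | ⟨-, rfl⟩
        · exact fun y hyu =>
            (Finset.mem_insert.1 (hc (Finset.mem_insert_self u b) hyu.le)).resolve_left hyu.ne
        · exact fun y hyu => hb (Finset.mem_insert_self u c) hyu.le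
      · rcases hstep with ⟨hub, rfl⟩ | ⟨huc, rfl⟩
        · exact fun v huv hvb => hub (hb hvb huv.le)
        · exact fun v huv hvb =>
            huc (hc ((Finset.mem_insert.1 hvb).resolve_left huv.ne') huv.le)
    refine ⟨hc, fun x hx => ?_⟩
    have hxu : x ≠ u := fun h => hx (h ▸ huU)
    rw [← ih.2 x hx]
    rcases hstep with ⟨-, rfl⟩ | ⟨-, rfl⟩ <;> simp [hxu]

lemma mem_comp_iff (hG : G.IsTwoColorGridPoset) (ht : IsIdeal t) :
    s ∈ G.comp γ t ↔ IsIdeal s ∧ ∀ x ∉ G.free t γ, x ∈ s ↔ x ∈ t := by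
  refine ⟨agree_of_mem_comp hG ht, fun ⟨hs, hagree⟩ => reflTransGen_gStep hs ht ?_ ?_⟩ <;>
  · intro x hx
    by_contra hcolor
    have := hagree x fun hxU => hcolor (color_eq_of_mem_free hG hxU)
    simp only [Finset.mem_sdiff] at hx
    tauto

/-- Free vertices of different fibers are incomparable (`chain_eq_of_lt_of_mem_imax`), so the
ideal condition only has to be checked inside each `I_j`. -/
lemma isIdeal_of_agree (hG : G.IsTwoColorGridPoset) (ht : IsIdeal t)
    (hs : ∀ x ∉ G.free t γ, x ∈ s ↔ x ∈ t)
    (hchain : ∀ i ∈ G.colorIdx γ, IdealOfChain (G.Imax t i) (s ∩ G.Imax t i)) :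
    IsIdeal s := by
  intro x hx y hyx
  obtain rfl | hlt := hyx.eq_or_lt
  · exact hx
  by_cases hxU : x ∈ G.free t γ
  · obtain ⟨i, hi, hxI⟩ := mem_free.1 hxU
    by_cases hyU : y ∈ G.free t γ
    · obtain ⟨j, -, hyI⟩ := mem_free.1 hyU
      have hyi : y ∈ G.Imax t i := by
        have := chain_eq_of_lt_of_mem_imax hG ht hxI hyI hlt
          ((color_eq_of_mem_free hG hxU).trans (color_eq_of_mem_free hG hyU).symm)
        rw [chain_eq_of_mem_imax hyI, chain_eq_of_mem_imax hxI] at this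
        exact this ▸ hyI
      exact (Finset.mem_inter.1 ((hchain i hi).2 x (Finset.mem_inter.2 ⟨hx, hxI⟩) y hyi hyx)).1
    · refine (hs y hyU).2 ?_
      rcases Finset.mem_union.1
        (isIdeal_union_imax ht i (Finset.mem_union_right t hxI) hyx) with hy | hy
      · exact hy
      · exact absurd (mem_free.2 ⟨i, hi, hy⟩) hyU
  · have hxt := (hs x hxU).1 hx
    by_cases hyU : y ∈ G.free t γ
    · obtain ⟨j, hj, hyI⟩ := mem_free.1 hyU
      have hxI : x ∉ G.Imax t j := fun h => hxU (mem_free.2 ⟨j, hj, h⟩)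
      exact absurd hyI (Finset.mem_sdiff.1
        (isIdeal_sdiff_imax ht j (Finset.mem_sdiff.2 ⟨hxt, hxI⟩) hyx)).2
    · exact (hs y hyU).2 (ht hxt hyx)

lemma subset_iff_forall_inter_imax_subset (hG : G.IsTwoColorGridPoset) (ht : IsIdeal t)
    {s₁ s₂ : Finset P} (hs₁ : s₁ ∈ G.comp γ t) (hs₂ : s₂ ∈ G.comp γ t) :
    s₁ ⊆ s₂ ↔ ∀ i ∈ G.colorIdx γ, s₁ ∩ G.Imax t i ⊆ s₂ ∩ G.Imax t i := by
  refine ⟨fun h i _ => Finset.inter_subset_inter_right h, fun h x hx => ?_⟩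
  by_cases hxU : x ∈ G.free t γ
  · obtain ⟨i, hi, hxI⟩ := mem_free.1 hxU
    exact (Finset.mem_inter.1 (h i hi (Finset.mem_inter.2 ⟨hx, hxI⟩))).1
  · have hxt := ((agree_of_mem_comp hG ht hs₁).2 x hxU).1 hx
    exact ((agree_of_mem_comp hG ht hs₂).2 x hxU).2 hxt

lemma exists_mem_comp_inter_imax_eq (hG : G.IsTwoColorGridPoset) (ht : IsIdeal t)
    {f : ℕ → Finset P} (hf : ∀ i ∈ G.colorIdx γ, IdealOfChain (G.Imax t i) (f i)) :
    ∃ s ∈ G.comp γ t, ∀ i ∈ G.colorIdx γ, s ∩ G.Imax t i = f i := by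
  set s := t \ G.free t γ ∪ (G.colorIdx γ).biUnion f
  have hinter : ∀ i ∈ G.colorIdx γ, s ∩ G.Imax t i = f i := by
    intro i hi
    ext x
    simp only [s, Finset.mem_inter, Finset.mem_union, Finset.mem_sdiff, Finset.mem_biUnion]
    constructor
    · rintro ⟨⟨-, hxU⟩ | ⟨j, hj, hxf⟩, hxI⟩
      · exact absurd (mem_free.2 ⟨i, hi, hxI⟩) hxU
      · obtain rfl : j = i :=
          (chain_eq_of_mem_imax ((hf j hj).1 hxf)).symm.trans (chain_eq_of_mem_imax hxI)
        exact hxf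
    · exact fun hxf => ⟨.inr ⟨i, hi, hxf⟩, (hf i hi).1 hxf⟩
  have hagree : ∀ x ∉ G.free t γ, x ∈ s ↔ x ∈ t := by
    intro x hxU
    simp only [s, Finset.mem_union, Finset.mem_sdiff, Finset.mem_biUnion, hxU, not_false_eq_true,
      and_true, or_iff_left_iff_imp, forall_exists_index, and_imp]
    exact fun j hj hxf => absurd (mem_free.2 ⟨j, hj, (hf j hj).1 hxf⟩) hxU
  have hs : IsIdeal s := isIdeal_of_agree hG ht hagree fun i hi => hinter i hi ▸ hf i hi
  exact ⟨s, (mem_comp_iff hG ht).2 ⟨hs, hagree⟩, hinter⟩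

end GridData

/-- Proposition 3.1: `φ(s) = (s ∩ I_1, …, s ∩ I_k)` is a well-defined poset isomorphism
from `comp_γ(t)` onto the product of the chains `J(I_1), …, J(I_k)`; in particular
each `J(I_j)` is a chain, `φ` is an order embedding in both directions (hence injective),
and `φ` is surjective. -/
theorem stmt_8 {P : Type} [PartialOrder P] [Fintype P] (G : GridData P)
    (hG : G.IsTwoColorGridPoset) (t : Finset P) (ht : IsIdeal t) (γ : Fin 2) :
    (∀ i ∈ G.colorIdx γ, ∀ s₁ s₂ : Finset P, IdealOfChain (G.Imax t i) s₁ →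
        IdealOfChain (G.Imax t i) s₂ → s₁ ⊆ s₂ ∨ s₂ ⊆ s₁) ∧
    (∀ s ∈ G.comp γ t, ∀ i ∈ G.colorIdx γ,
        IdealOfChain (G.Imax t i) (s ∩ G.Imax t i)) ∧
    (∀ s₁ ∈ G.comp γ t, ∀ s₂ ∈ G.comp γ t,
        (s₁ ⊆ s₂ ↔ ∀ i ∈ G.colorIdx γ, s₁ ∩ G.Imax t i ⊆ s₂ ∩ G.Imax t i)) ∧
    (∀ f : ℕ → Finset P, (∀ i ∈ G.colorIdx γ, IdealOfChain (G.Imax t i) (f i)) →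
        ∃ s ∈ G.comp γ t, ∀ i ∈ G.colorIdx γ, s ∩ G.Imax t i = f i) :=
  ⟨fun _ _ _ _ => IdealOfChain.subset_or_subset (GridData.isChain_imax hG t _),
    fun _ hs _ _ => (GridData.agree_of_mem_comp hG ht hs).1.idealOfChain_inter _,
    fun _ hs₁ _ hs₂ => GridData.subset_iff_forall_inter_imax_subset hG ht hs₁ hs₂,
    fun _ hf => GridData.exists_mem_comp_inter_imax_eq hG ht hf⟩
end

section
/- Let P be a grid poset and let t be a proper order ideal of P (so t ≠ P). Let k be the largest index in {1,…,m} such that C_k ⊈ t. Then z_k ∉ t, and t ∪ C_k is an order ideal of P. -/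
/-!
Along a covering relation `u ⋖ v` the chain index can only drop from `u` to `v`, so the chain
index is antitone on `P`. Hence everything below an element of `C_k` lies in `C_k` or in a fiber
`C_i` with `i > k`, and those fibers are contained in `t` by the choice of `k`. Since `z_k` bounds
the chain `C_k` from above, `z_k ∈ t` would force `C_k ⊆ t`.
-/

open scoped Classical

namespace GridData

variable {P : Type} [PartialOrder P] [Fintype P]

/-- The largest index `k ∈ {1,…,m}` such that the fiber `C k` is not contained in `t`. -/
noncomputable def kIdx (G : GridData P) (t : Finset P) : ℕ :=
  sSup {i | i ∈ Finset.Icc 1 G.m ∧ ¬ G.fiber i ⊆ t}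

/-- `z_i`, the maximal element of the (chain) fiber `C i`. -/
noncomputable def zEl [Nonempty P] (G : GridData P) (i : ℕ) : P :=
  if h : ∃ z ∈ G.fiber i, ∀ w ∈ G.fiber i, w ≤ z then h.choose else Classical.arbitrary P

/-- `v(t) := z_k` where `k` is the largest index with `C_k ⊄ t`. -/
noncomputable def vOf [Nonempty P] (G : GridData P) (t : Finset P) : P :=
  G.zEl (G.kIdx t)

/-- The vertex-coloring function `κ(t) := color(v(t))`. -/
noncomputable def kOf [Nonempty P] (G : GridData P) (t : Finset P) : Fin 2 :=
  G.color (G.vOf t)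

/-- A face of `comp_γ(t)` with respect to the isomorphism
`φ(s) = (s ∩ I_1, …, s ∩ I_k)`: for some color-`γ` fiber index `q`, the set of
elements of `comp_γ(t)` whose `q`-th coordinate `s ∩ I_q` is the maximal element
`I_q` of the chain `J(I_q)`. -/
def IsFace (G : GridData P) (γ : Fin 2) (t : Finset P) (S : Set (Finset P)) : Prop :=
  ∃ q ∈ G.colorIdx γ, S = {s | s ∈ G.comp γ t ∧ G.Imax t q ⊆ s}

/-- A sub-face of `comp_γ(t)`: the complement (within `comp_γ(t)`) of a face. -/
def IsSubFace (G : GridData P) (γ : Fin 2) (t : Finset P) (S : Set (Finset P)) : Prop :=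
  ∃ q ∈ G.colorIdx γ, S = {s | s ∈ G.comp γ t ∧ ¬ G.Imax t q ⊆ s}

end GridData

theorem Finset.exists_isGreatest_of_isChain {α : Type*} [PartialOrder α] {s : Finset α}
    (hs : IsChain (· ≤ ·) (s : Set α)) (hne : s.Nonempty) : ∃ z, IsGreatest (s : Set α) z := by
  obtain ⟨z, hz, hmax⟩ := s.exists_maximal hne
  refine ⟨z, hz, fun w hw => ?_⟩
  rcases eq_or_ne w z with rfl | hwz
  · exact le_rfl
  · exact (hs hw hz hwz).elim id (hmax hw)

namespace GridData

variable {P : Type} [PartialOrder P] [Fintype P] {G : GridData P}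

@[simp]
theorem mem_fiber {i : ℕ} {u : P} : u ∈ G.fiber i ↔ G.chain u = i := by
  simp [fiber]

theorem bddAbove_kIdx_set (t : Finset P) :
    BddAbove {i | i ∈ Finset.Icc 1 G.m ∧ ¬ G.fiber i ⊆ t} :=
  ⟨G.m, fun _ hi => (Finset.mem_Icc.1 hi.1).2⟩

namespace IsGridPoset

variable (hG : G.IsGridPoset)
include hG

theorem antitone_chain : Antitone G.chain := by
  let : LocallyFiniteOrder P := Fintype.toLocallyFiniteOrder
  refine (antitone_iff_forall_covBy _).2 fun u v huv => ?_
  rcases hG.2.2.2.2 u v huv with h | h <;> omega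

theorem fiber_nonempty {i : ℕ} (hi : i ∈ Finset.Icc 1 G.m) : (G.fiber i).Nonempty := by
  obtain ⟨u, hu⟩ := hG.2.2.1 i hi
  exact ⟨u, mem_fiber.2 hu⟩

theorem isChain_fiber (i : ℕ) : IsChain (· ≤ ·) (G.fiber i : Set P) := fun u hu v hv _ =>
  hG.2.2.2.1 u v ((mem_fiber.1 hu).trans (mem_fiber.1 hv).symm)

theorem isGreatest_zEl [Nonempty P] {i : ℕ} (hi : i ∈ Finset.Icc 1 G.m) :
    IsGreatest (G.fiber i : Set P) (G.zEl i) := by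
  obtain ⟨z, hz, hzub⟩ :=
    Finset.exists_isGreatest_of_isChain (hG.isChain_fiber i) (hG.fiber_nonempty hi)
  have hex : ∃ z ∈ G.fiber i, ∀ w ∈ G.fiber i, w ≤ z := ⟨z, hz, fun _ hw => hzub hw⟩
  rw [zEl, dif_pos hex]
  exact ⟨hex.choose_spec.1, fun w hw => hex.choose_spec.2 w hw⟩

theorem kIdx_mem {t : Finset P} (htop : t ≠ Finset.univ) :
    G.kIdx t ∈ Finset.Icc 1 G.m ∧ ¬ G.fiber (G.kIdx t) ⊆ t := by
  obtain ⟨u, hu⟩ : ∃ u, u ∉ t := by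
    simpa [Finset.eq_univ_iff_forall] using htop
  have hne : {i | i ∈ Finset.Icc 1 G.m ∧ ¬ G.fiber i ⊆ t}.Nonempty :=
    ⟨G.chain u, hG.2.1 u, fun hsub => hu (hsub (mem_fiber.2 rfl))⟩
  exact Nat.sSup_mem hne (bddAbove_kIdx_set t)

theorem fiber_subset_of_kIdx_lt {t : Finset P} {i : ℕ} (hi : G.kIdx t < i) :
    G.fiber i ⊆ t := by
  intro u hu
  by_contra hut
  have hmem : i ∈ {i | i ∈ Finset.Icc 1 G.m ∧ ¬ G.fiber i ⊆ t} :=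
    ⟨mem_fiber.1 hu ▸ hG.2.1 u, fun hsub => hut (hsub hu)⟩
  exact absurd (le_csSup (bddAbove_kIdx_set t) hmem) hi.not_ge

theorem vOf_notMem [Nonempty P] {t : Finset P} (ht : IsIdeal t) (htop : t ≠ Finset.univ) :
    G.vOf t ∉ t := fun hv =>
  (hG.kIdx_mem htop).2 fun _ hw => ht hv ((hG.isGreatest_zEl (hG.kIdx_mem htop).1).2 hw)

theorem isIdeal_union_fiber_kIdx {t : Finset P} (ht : IsIdeal t) :
    IsIdeal (t ∪ G.fiber (G.kIdx t)) := by
  intro x hx y hyx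
  rcases Finset.mem_union.1 hx with hx | hx
  · exact Finset.mem_union_left _ (ht hx hyx)
  · have hky : G.kIdx t ≤ G.chain y := mem_fiber.1 hx ▸ hG.antitone_chain hyx
    rcases hky.lt_or_eq with hlt | heq
    · exact Finset.mem_union_left _ (hG.fiber_subset_of_kIdx_lt hlt (mem_fiber.2 rfl))
    · exact Finset.mem_union_right _ (mem_fiber.2 heq.symm)

end IsGridPoset

end GridData

/-- For a proper order ideal `t` of a grid poset, if `k` is the largest index with
`C_k ⊄ t`, then `z_k ∉ t` and `t ∪ C_k` is an order ideal. -/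
theorem stmt_18 {P : Type} [PartialOrder P] [Fintype P] [Nonempty P] (G : GridData P)
    (hG : G.IsGridPoset)
    (t : Finset P) (ht : IsIdeal t) (htop : t ≠ Finset.univ) :
    G.vOf t ∉ t ∧ IsIdeal (t ∪ G.fiber (G.kIdx t)) :=
  ⟨hG.vOf_notMem ht htop, hG.isIdeal_union_fiber_kIdx ht⟩
end
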